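/- arXiv:1412.1995 — 5 statements merged into one kernel-verified Lean document; each statement's English description precedes it below -/
import Mathlib

section
/- For all n ∈ ℕ and all k ≥ 1, Q(S_n) ≤ s_k(n)^2 + Σ_{l=k, l odd}^{n} Q(S_{n-l})/l^2. -/
open Equiv

/-- κ_E(Sₙ): the conditional probability that two independent uniform elements of Sₙ
have the same cycle type, given that both are even (by convention 1 for n ≤ 1). -/
noncomputable def kappaE (n : ℕ) : ℝ :=
  if n ≤ 1 then 1 else
    (Nat.card {p : Perm (Fin n) × Perm (Fin n) //
        Perm.sign p.1 = 1 ∧ Perm.sign p.2 = 1 ∧ p.1.cycleType = p.2.cycleType} : ℝ) /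
      (Nat.card {σ : Perm (Fin n) // Perm.sign σ = 1} : ℝ) ^ 2

/-- κ_O(Sₙ): the conditional probability that two independent uniform elements of Sₙ
have the same cycle type, given that both are odd (by convention 1 for n ≤ 1). -/
noncomputable def kappaO (n : ℕ) : ℝ :=
  if n ≤ 1 then 1 else
    (Nat.card {p : Perm (Fin n) × Perm (Fin n) //
        Perm.sign p.1 = -1 ∧ Perm.sign p.2 = -1 ∧ p.1.cycleType = p.2.cycleType} : ℝ) /
      (Nat.card {σ : Perm (Fin n) // Perm.sign σ = -1} : ℝ) ^ 2

/-- s_k(n): the probability that a uniformly random permutation of n points has all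
cycles of length strictly less than k. -/
noncomputable def s (k n : ℕ) : ℝ :=
  (Nat.card {σ : Perm (Fin n) // ∀ i ∈ σ.cycleType, i < k} : ℝ) / (Nat.factorial n : ℝ)

/-- Q(Sₙ): the probability that two independent uniform elements of Sₙ have the same
cycle type, consisting of cycles of pairwise distinct odd lengths (including the
fixed points as cycles of length 1). -/
noncomputable def Q (n : ℕ) : ℝ :=
  (Nat.card {p : Perm (Fin n) × Perm (Fin n) //
      p.1.cycleType = p.2.cycleType ∧ p.1.cycleType.Nodup ∧
      (∀ i ∈ p.1.cycleType, Odd i) ∧ n - p.1.cycleType.sum ≤ 1} : ℝ) /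
    (Nat.factorial n : ℝ) ^ 2

/-- κ(Sₙ): the probability that two independent uniform elements of Sₙ are conjugate. -/
noncomputable def kappa (n : ℕ) : ℝ :=
  (Nat.card {p : Perm (Fin n) × Perm (Fin n) // IsConj p.1 p.2} : ℝ) /
    (Nat.factorial n : ℝ) ^ 2

/-- κ(Aₙ): the probability that two independent uniform elements of Aₙ are conjugate
in Aₙ. -/
noncomputable def kappaA (n : ℕ) : ℝ :=
  (Nat.card {p : alternatingGroup (Fin n) × alternatingGroup (Fin n) //
      IsConj p.1 p.2} : ℝ) / (Nat.card (alternatingGroup (Fin n)) : ℝ) ^ 2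

/-! Split the pairs counted by `Q n` according to whether all cycles of `σ` are shorter than
`k` (at most `(s k n · n!)²` pairs) or `σ`, and hence `τ`, has a cycle of some odd length
`l ∈ [k, n]`. In the second case mark a point `x` on an `l`-cycle of `σ` and a point `y` on
an `l`-cycle of `τ` (at least `l²` choices). The marked pair is determined by the orbits
`x, σ x, …, σ^(l-1) x` and `y, …, τ^(l-1) y` (at most `(n)_l` choices each) together with
what `σ` and `τ` do on the other `n - l` points, which is again a pair counted by
`Q (n - l)`. Hence those pairs number at most
`(n)_l² / l² · Q(n-l) · (n-l)!² = n!² · Q(n-l) / l²`. -/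

open Finset Nat

namespace Equiv.Perm

variable {α : Type*} [Fintype α] [DecidableEq α]

/-- Junk value `1` unless `τ` preserves `tᶜ` and `#tᶜ = m`. -/
noncomputable def restrictCompl (t : Finset α) (m : ℕ) (τ : Perm α) : Perm (Fin m) :=
  if h : #tᶜ = m ∧ ∀ y, τ y ∈ tᶜ ↔ y ∈ tᶜ then
    (tᶜ.equivFin.trans (finCongr h.1)).permCongr (τ.subtypePerm h.2)
  else 1

theorem apply_mem_compl_iff_of_forall_apply_eq {t : Finset α} {τ : Perm α}
    (hτ : ∀ y ∈ t, τ y = y) (y : α) : τ y ∈ tᶜ ↔ y ∈ tᶜ := by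
  simp only [mem_compl, not_iff_not]
  refine ⟨fun hy => ?_, fun hy => (hτ y hy).symm ▸ hy⟩
  rwa [← τ.injective (hτ _ hy)]

theorem extendDomain_restrictCompl {t : Finset α} {m : ℕ} {τ : Perm α}
    (h : #tᶜ = m) (hτ : ∀ y ∈ t, τ y = y) :
    (τ.restrictCompl t m).extendDomain (tᶜ.equivFin.trans (finCongr h)).symm = τ := by
  ext y
  by_cases hy : y ∈ tᶜ
  · rw [extendDomain_apply_subtype _ _ hy, restrictCompl,
      dif_pos ⟨h, apply_mem_compl_iff_of_forall_apply_eq hτ⟩]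
    simp
  · rw [extendDomain_apply_not_subtype _ _ hy, hτ y (by simpa using hy)]

theorem cycleType_restrictCompl {t : Finset α} {m : ℕ} {τ : Perm α}
    (h : #tᶜ = m) (hτ : ∀ y ∈ t, τ y = y) :
    (τ.restrictCompl t m).cycleType = τ.cycleType := by
  conv_rhs => rw [← extendDomain_restrictCompl h hτ]
  rw [cycleType_extendDomain]

theorem restrictCompl_injOn (t : Finset α) {m : ℕ} (h : #tᶜ = m) :
    Set.InjOn (restrictCompl t m) {τ | ∀ y ∈ t, τ y = y} := by
  intro τ hτ τ' hτ' he
  rw [← extendDomain_restrictCompl h hτ, ← extendDomain_restrictCompl h hτ', he]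

theorem pow_apply_injective_fin {σ : Perm α} {x : α} {l : ℕ}
    (hl : #(σ.cycleOf x).support = l) : Function.Injective fun j : Fin l => (σ ^ (j : ℕ)) x := by
  intro i j hij
  have hlen : (σ.toList x).length = l := by rw [length_toList, hl]
  exact Fin.ext <| (List.Nodup.getElem_inj_iff (nodup_toList σ x) (i := i) (j := j)
    (hi := by omega) (hj := by omega)).mp (by simpa [getElem_toList] using hij)

theorem cycleOf_eq_and_eq_of_pow_apply_eq {σ τ : Perm α} {x y : α} {l : ℕ} (hl : 0 < l)
    (hσ : #(σ.cycleOf x).support = l) (hτ : #(τ.cycleOf y).support = l)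
    (h : ∀ j < l, (σ ^ j) x = (τ ^ j) y) : σ.cycleOf x = τ.cycleOf y ∧ x = y := by
  have hlist : σ.toList x = τ.toList y :=
    List.ext_getElem (by rw [length_toList, length_toList, hσ, hτ]) fun j hj _ => by
      rw [getElem_toList, getElem_toList, h j (by rwa [length_toList, hσ] at hj)]
  exact ⟨by rw [← formPerm_toList, hlist, formPerm_toList], by simpa using h 0 hl⟩

theorem le_card_filter_card_support_cycleOf_eq {σ : Perm α} {l : ℕ} (h : l ∈ σ.cycleType) :
    l ≤ #{x | #(σ.cycleOf x).support = l} := by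
  obtain ⟨c, hc, rfl⟩ := Multiset.mem_map.mp (σ.cycleType_def ▸ h)
  refine card_le_card fun y hy => ?_
  simp [← cycle_is_cycleOf hy hc]

theorem mul_inv_apply_of_mem_cycleFactorsFinset {σ c : Perm α} (hc : c ∈ σ.cycleFactorsFinset)
    {y : α} (hy : y ∈ c.support) : (σ * c⁻¹) y = y :=
  ((disjoint_mul_inv_of_mem_cycleFactorsFinset hc) y).resolve_right (mem_support.mp hy)

theorem mul_cycleOf_inv_apply_of_mem_support {σ : Perm α} {x y : α}
    (hy : y ∈ (σ.cycleOf x).support) : (σ * (σ.cycleOf x)⁻¹) y = y :=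
  mul_inv_apply_of_mem_cycleFactorsFinset
    (cycleOf_mem_cycleFactorsFinset_iff.mpr (mem_support_cycleOf_iff.mp hy).2) hy

theorem cycleType_eq_cons_cycleType_mul_cycleOf_inv {σ : Perm α} {x : α} (hx : x ∈ σ.support) :
    σ.cycleType = #(σ.cycleOf x).support ::ₘ (σ * (σ.cycleOf x)⁻¹).cycleType := by
  have hc := cycleOf_mem_cycleFactorsFinset_iff.mpr hx
  have hcyc := ((isCycle_cycleOf_iff σ).mpr (mem_support.mp hx)).cycleType
  have hmem : #(σ.cycleOf x).support ∈ σ.cycleType :=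
    Multiset.mem_of_le (cycleType_le_of_mem_cycleFactorsFinset hc) (by simp [hcyc])
  rw [cycleType_mul_inv_mem_cycleFactorsFinset_eq_sub hc, hcyc, Multiset.sub_singleton,
    Multiset.cons_erase hmem]

noncomputable def cutCycleOf (l m : ℕ) (σ : Perm α) (x : α) : (Fin l → α) × Perm (Fin m) :=
  (fun j => (σ ^ (j : ℕ)) x, (σ * (σ.cycleOf x)⁻¹).restrictCompl (σ.cycleOf x).support m)

theorem eq_and_eq_of_cutCycleOf_eq {σ τ : Perm α} {x y : α} {l m : ℕ} (hl : 0 < l)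
    (hm : Fintype.card α - l = m) (hσ : #(σ.cycleOf x).support = l)
    (hτ : #(τ.cycleOf y).support = l) (he : cutCycleOf l m σ x = cutCycleOf l m τ y) :
    σ = τ ∧ x = y := by
  simp only [cutCycleOf, Prod.mk.injEq] at he
  obtain ⟨hc, rfl⟩ := cycleOf_eq_and_eq_of_pow_apply_eq hl hσ hτ
    fun j hj => congrFun he.1 ⟨j, hj⟩
  have hcard : #(τ.cycleOf x).supportᶜ = m := by rw [card_compl, hτ, hm]
  have hrest := he.2
  rw [hc] at hrest
  have hfix : ∀ y ∈ (τ.cycleOf x).support, (σ * (τ.cycleOf x)⁻¹) y = y := by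
    rw [← hc]
    exact fun y hy => mul_cycleOf_inv_apply_of_mem_support hy
  exact ⟨mul_right_cancel <| restrictCompl_injOn _ hcard hfix
    (fun y hy => mul_cycleOf_inv_apply_of_mem_support hy) hrest, rfl⟩

theorem cycleType_eq_cons_cycleType_cutCycleOf {σ : Perm α} {x : α} {l m : ℕ} (hl : 0 < l)
    (hm : Fintype.card α - l = m) (hσ : #(σ.cycleOf x).support = l) :
    σ.cycleType = l ::ₘ (cutCycleOf l m σ x).2.cycleType := by
  have hx : x ∈ σ.support := by
    by_contra hx
    simp [(cycleOf_eq_one_iff σ).mpr (notMem_support.mp hx)] at hσ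
    omega
  rw [cutCycleOf, cycleType_restrictCompl (by rw [card_compl, hσ, hm])
    fun y hy => mul_cycleOf_inv_apply_of_mem_support hy, ← hσ]
  exact cycleType_eq_cons_cycleType_mul_cycleOf_inv hx

end Equiv.Perm

open Equiv.Perm

theorem card_filter_injective_fin (l n : ℕ) :
    #{f : Fin l → Fin n | Function.Injective f} = n.descFactorial l := by
  rw [← Fintype.card_subtype, Fintype.card_congr (Equiv.subtypeInjectiveEquivEmbedding _ _),
    Fintype.card_embedding_eq, Fintype.card_fin, Fintype.card_fin]

/-- `cycleType` omits fixed points, so `n - μ.sum ≤ 1` says that at most one part equals `1`. -/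
def IsDistinctOddType (n : ℕ) (μ : Multiset ℕ) : Prop :=
  μ.Nodup ∧ (∀ i ∈ μ, Odd i) ∧ n - μ.sum ≤ 1

instance (n : ℕ) : DecidablePred (IsDistinctOddType n) :=
  fun _ => inferInstanceAs (Decidable (_ ∧ _ ∧ _))

theorem IsDistinctOddType.of_cons {n l : ℕ} {μ : Multiset ℕ}
    (h : IsDistinctOddType n (l ::ₘ μ)) : IsDistinctOddType (n - l) μ := by
  obtain ⟨hnd, hodd, hsum⟩ := h
  refine ⟨(Multiset.nodup_cons.mp hnd).2, fun i hi => hodd i (Multiset.mem_cons_of_mem hi), ?_⟩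
  rw [Multiset.sum_cons] at hsum
  omega

def distinctOddPairs (n : ℕ) : Finset (Perm (Fin n) × Perm (Fin n)) :=
  {p | p.1.cycleType = p.2.cycleType ∧ IsDistinctOddType n p.1.cycleType}

@[simp]
theorem mem_distinctOddPairs {n : ℕ} {p : Perm (Fin n) × Perm (Fin n)} :
    p ∈ distinctOddPairs n ↔
      p.1.cycleType = p.2.cycleType ∧ IsDistinctOddType n p.1.cycleType := by
  simp [distinctOddPairs]

def shortCyclePerms (k n : ℕ) : Finset (Perm (Fin n)) :=
  {σ | ∀ i ∈ σ.cycleType, i < k}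

theorem Q_eq_card_div (n : ℕ) : Q n = #(distinctOddPairs n) / (n ! : ℝ) ^ 2 := by
  rw [Q, Nat.card_eq_fintype_card, Fintype.card_subtype]
  rfl

theorem s_eq_card_div (k n : ℕ) : s k n = #(shortCyclePerms k n) / (n ! : ℝ) := by
  rw [s, Nat.card_eq_fintype_card, Fintype.card_subtype]
  rfl

theorem card_distinctOddPairs_le (n k : ℕ) :
    #(distinctOddPairs n) ≤ #(shortCyclePerms k n) ^ 2 +
      ∑ l ∈ (Icc k n).filter (fun l => Odd l), #{p ∈ distinctOddPairs n | l ∈ p.1.cycleType} := by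
  have hcover : distinctOddPairs n ⊆ (shortCyclePerms k n ×ˢ shortCyclePerms k n) ∪
      ((Icc k n).filter (fun l => Odd l)).biUnion
        fun l => {p ∈ distinctOddPairs n | l ∈ p.1.cycleType} := by
    intro p hp
    obtain ⟨hct, -, hodd, -⟩ := mem_distinctOddPairs.mp hp
    by_cases hshort : ∀ i ∈ p.1.cycleType, i < k
    · refine mem_union_left _ (mem_product.mpr ⟨?_, ?_⟩)
      · simpa [shortCyclePerms] using hshort
      · simpa [shortCyclePerms, ← hct] using hshort
    · push Not at hshort
      obtain ⟨l, hl, hkl⟩ := hshort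
      have hln : l ≤ n :=
        (le_card_support_of_mem_cycleType hl).trans ((card_le_univ _).trans (by simp))
      refine mem_union_right _ (mem_biUnion.mpr ⟨l, ?_, mem_filter.mpr ⟨hp, hl⟩⟩)
      simp [hkl, hln, hodd l hl]
  calc #(distinctOddPairs n)
      ≤ #(shortCyclePerms k n ×ˢ shortCyclePerms k n) +
        #(((Icc k n).filter (fun l => Odd l)).biUnion
          fun l => {p ∈ distinctOddPairs n | l ∈ p.1.cycleType}) :=
        (card_le_card hcover).trans (card_union_le _ _)
    _ ≤ _ := by
      rw [card_product, ← sq]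
      exact Nat.add_le_add_left card_biUnion_le _

theorem cutCycleOf_mem_distinctOddPairs {n l : ℕ} (hl : 0 < l) {σ τ : Perm (Fin n)}
    {x y : Fin n} (hp : (σ, τ) ∈ distinctOddPairs n) (hσ : #(σ.cycleOf x).support = l)
    (hτ : #(τ.cycleOf y).support = l) :
    ((cutCycleOf l (n - l) σ x).2, (cutCycleOf l (n - l) τ y).2) ∈ distinctOddPairs (n - l) := by
  obtain ⟨hct, hodd⟩ := mem_distinctOddPairs.mp hp
  have hm : Fintype.card (Fin n) - l = n - l := by rw [Fintype.card_fin]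
  have eσ := cycleType_eq_cons_cycleType_cutCycleOf hl hm hσ
  have eτ := cycleType_eq_cons_cycleType_cutCycleOf hl hm hτ
  exact mem_distinctOddPairs.mpr
    ⟨(Multiset.cons_inj_right l).mp (eσ ▸ eτ ▸ hct), (eσ ▸ hodd).of_cons⟩

theorem sq_mul_card_filter_mem_cycleType_le (n l : ℕ) :
    l ^ 2 * #{p ∈ distinctOddPairs n | l ∈ p.1.cycleType} ≤
      n.descFactorial l ^ 2 * #(distinctOddPairs (n - l)) := by
  rcases Nat.eq_zero_or_pos l with rfl | hl
  · simp
  have hm : Fintype.card (Fin n) - l = n - l := by rw [Fintype.card_fin]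
  set B := {p ∈ distinctOddPairs n | l ∈ p.1.cycleType}
  let X : Perm (Fin n) → Finset (Fin n) := fun σ => {x | #(σ.cycleOf x).support = l}
  let marked := B.sigma fun p => X p.1 ×ˢ X p.2
  let injective : Finset (Fin l → Fin n) := {f | Function.Injective f}
  let cut : (Σ _ : Perm (Fin n) × Perm (Fin n), Fin n × Fin n) →
      ((Fin l → Fin n) × (Fin l → Fin n)) × (Perm (Fin (n - l)) × Perm (Fin (n - l))) :=
    fun d => (((cutCycleOf l (n - l) d.1.1 d.2.1).1, (cutCycleOf l (n - l) d.1.2 d.2.2).1),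
      ((cutCycleOf l (n - l) d.1.1 d.2.1).2, (cutCycleOf l (n - l) d.1.2 d.2.2).2))
  have hmarked : l ^ 2 * #B ≤ #marked := by
    rw [card_sigma, mul_comm, sq, ← smul_eq_mul]
    refine card_nsmul_le_sum _ _ _ fun p hp => ?_
    obtain ⟨hp, hl1⟩ := mem_filter.mp hp
    rw [card_product]
    exact Nat.mul_le_mul (le_card_filter_card_support_cycleOf_eq hl1)
      (le_card_filter_card_support_cycleOf_eq ((mem_distinctOddPairs.mp hp).1 ▸ hl1))
  have hcut : #marked ≤ #((injective ×ˢ injective) ×ˢ distinctOddPairs (n - l)) := by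
    refine card_le_card_of_injOn cut ?_ ?_
    · rintro ⟨⟨σ, τ⟩, x, y⟩ hd
      simp only [marked, X, B, mem_coe, mem_sigma, mem_filter, mem_product, mem_univ,
        true_and] at hd
      simp only [cut, injective, mem_coe, mem_product, mem_filter, mem_univ, true_and]
      exact ⟨⟨pow_apply_injective_fin hd.2.1, pow_apply_injective_fin hd.2.2⟩,
        cutCycleOf_mem_distinctOddPairs hl hd.1.1 hd.2.1 hd.2.2⟩
    · rintro ⟨⟨σ, τ⟩, x, y⟩ hd ⟨⟨σ', τ'⟩, x', y'⟩ hd' he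
      simp only [marked, X, mem_coe, mem_sigma, mem_product, mem_filter, mem_univ,
        true_and] at hd hd'
      simp only [cut, Prod.mk.injEq] at he
      obtain ⟨rfl, rfl⟩ := eq_and_eq_of_cutCycleOf_eq hl hm hd.2.1 hd'.2.1
        (Prod.ext he.1.1 he.2.1)
      obtain ⟨rfl, rfl⟩ := eq_and_eq_of_cutCycleOf_eq hl hm hd.2.2 hd'.2.2
        (Prod.ext he.1.2 he.2.2)
      rfl
  calc l ^ 2 * #B ≤ #marked := hmarked
    _ ≤ _ := hcut
    _ = n.descFactorial l ^ 2 * #(distinctOddPairs (n - l)) := by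
      rw [card_product, card_product, card_filter_injective_fin, sq]

theorem card_filter_mem_cycleType_div_le {n l : ℕ} (hl : 0 < l) (hln : l ≤ n) :
    (#{p ∈ distinctOddPairs n | l ∈ p.1.cycleType} : ℝ) / (n ! : ℝ) ^ 2 ≤
      Q (n - l) / (l : ℝ) ^ 2 := by
  have hfact : (n ! : ℝ) = (n - l)! * n.descFactorial l := by
    exact_mod_cast (factorial_mul_descFactorial hln).symm
  have hcount : (l : ℝ) ^ 2 * #{p ∈ distinctOddPairs n | l ∈ p.1.cycleType} ≤
      (n.descFactorial l : ℝ) ^ 2 * #(distinctOddPairs (n - l)) := by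
    exact_mod_cast sq_mul_card_filter_mem_cycleType_le n l
  have hdesc : (0 : ℝ) < n.descFactorial l := by exact_mod_cast descFactorial_pos.mpr hln
  rw [Q_eq_card_div, div_div, div_le_div_iff₀ (by positivity) (by positivity), hfact]
  nlinarith [mul_le_mul_of_nonneg_left hcount (sq_nonneg ((n - l)! : ℝ))]

theorem Q_upper_bound_general (n k : ℕ) :
    Q n ≤ s k n ^ 2 +
      ∑ l ∈ (Finset.Icc k n).filter (fun l => Odd l), Q (n - l) / (l : ℝ) ^ 2 := by
  rw [Q_eq_card_div, s_eq_card_div, div_pow]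
  calc (#(distinctOddPairs n) : ℝ) / (n ! : ℝ) ^ 2
      ≤ ((#(shortCyclePerms k n) ^ 2 + ∑ l ∈ (Icc k n).filter (fun l => Odd l),
          #{p ∈ distinctOddPairs n | l ∈ p.1.cycleType} : ℕ) : ℝ) / (n ! : ℝ) ^ 2 := by
        gcongr
        exact_mod_cast card_distinctOddPairs_le n k
    _ = (#(shortCyclePerms k n) : ℝ) ^ 2 / (n ! : ℝ) ^ 2 +
        ∑ l ∈ (Icc k n).filter (fun l => Odd l),
          (#{p ∈ distinctOddPairs n | l ∈ p.1.cycleType} : ℝ) / (n ! : ℝ) ^ 2 := by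
        push_cast
        rw [add_div, sum_div]
    _ ≤ _ := by
      refine add_le_add_right (sum_le_sum fun l hl => ?_) _
      obtain ⟨hl, hodd⟩ := mem_filter.mp hl
      exact card_filter_mem_cycleType_div_le hodd.pos (mem_Icc.mp hl).2

/-- Upper bound for Q(Sₙ): Proposition 2.3, first inequality. -/
theorem Q_upper_bound (n k : ℕ) (hk : 1 ≤ k) :
    Q n ≤ s k n ^ 2 +
      ∑ l ∈ (Finset.Icc k n).filter (fun l => Odd l), Q (n - l) / (l : ℝ) ^ 2 :=
  Q_upper_bound_general n k
end

section
/- For all n ∈ ℕ and all k with n/2 < k ≤ n, Q(S_n) ≥ Σ_{l=k, l odd}^{n} Q(S_{n-l})/l^2. -/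
open Equiv

/-! By the class-size formula, a cycle type `m` with distinct parts and at most one fixed point
is shared by exactly `n! / ∏ m` permutations of `Fin n`, so `Q n = ∑ 1 / (∏ m)²` over the sets `m`
of distinct odd parts `≥ 3` with `n - ∑ m ≤ 1`. For odd `l > n / 2`, adjoining the part `l` maps
these sets for `n - l` injectively into those for `n` and divides the weight by `l²`; two such
parts never fit into `n` together, so the images for different `l` are disjoint. -/

open Finset

namespace Equiv.Perm

variable {α : Type*} [Fintype α] [DecidableEq α]

theorem mem_image_cycleType_iff {m : Multiset ℕ} :
    m ∈ (univ : Finset (Perm α)).image cycleType ↔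
      m.sum ≤ Fintype.card α ∧ ∀ a ∈ m, 2 ≤ a := by
  simp [← exists_with_cycleType_iff]

theorem card_pairs_sameCycleType_eq_sum_sq (P : Multiset ℕ → Prop) [DecidablePred P] :
    #{p : Perm α × Perm α | p.1.cycleType = p.2.cycleType ∧ P p.1.cycleType} =
      ∑ m ∈ ((univ : Finset (Perm α)).image cycleType).filter P,
        #{g : Perm α | g.cycleType = m} ^ 2 := by
  rw [card_eq_sum_card_fiberwise (f := fun p => p.1.cycleType)
    (t := ((univ : Finset (Perm α)).image cycleType).filter P)]
  · refine sum_congr rfl fun m hm => ?_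
    rw [sq, ← card_product]
    congr 1
    ext ⟨σ, τ⟩
    simp only [mem_filter, mem_univ, true_and, mem_product]
    constructor
    · rintro ⟨⟨hστ, -⟩, rfl⟩
      exact ⟨rfl, hστ.symm⟩
    · rintro ⟨rfl, hτ⟩
      exact ⟨⟨hτ.symm, (mem_filter.mp hm).2⟩, rfl⟩
  · intro p hp
    simp only [coe_filter, mem_univ, true_and, Set.mem_ofPred_eq] at hp
    simp [hp.2]

theorem card_of_cycleType_mul_prod_of_nodup {m : Multiset ℕ} (hm : m.Nodup)
    (hsum : m.sum ≤ Fintype.card α) (hfix : Fintype.card α - m.sum ≤ 1) (h2 : ∀ a ∈ m, 2 ≤ a) :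
    #{g : Perm α | g.cycleType = m} * m.prod = (Fintype.card α).factorial := by
  have hcount : ∏ a ∈ m.toFinset, (m.count a).factorial = 1 :=
    prod_eq_one fun a ha => by
      rw [Multiset.count_eq_one_of_mem hm (Multiset.mem_toFinset.mp ha), Nat.factorial_one]
  have := card_of_cycleType_mul_eq (α := α) m
  rwa [if_pos ⟨hsum, h2⟩, Nat.factorial_eq_one.mpr hfix, hcount, one_mul, mul_one] at this

end Equiv.Perm

open Equiv.Perm

def oddDistinctCycleTypes (n : ℕ) : Finset (Multiset ℕ) :=
  ((univ : Finset (Perm (Fin n))).image cycleType).filter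
    fun m => m.Nodup ∧ (∀ i ∈ m, Odd i) ∧ n - m.sum ≤ 1

theorem Q_eq_sum_oddDistinctCycleTypes (n : ℕ) :
    Q n = ∑ m ∈ oddDistinctCycleTypes n, ((m.prod : ℝ) ^ 2)⁻¹ := by
  classical
  rw [Q, Nat.card_eq_fintype_card, Fintype.card_subtype, card_pairs_sameCycleType_eq_sum_sq
    (fun m => m.Nodup ∧ (∀ i ∈ m, Odd i) ∧ n - m.sum ≤ 1), Nat.cast_sum, sum_div]
  refine sum_congr rfl fun m hm => ?_
  obtain ⟨hct, hnodup, -, hfix⟩ := mem_filter.mp hm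
  obtain ⟨hsum, h2⟩ := mem_image_cycleType_iff.mp hct
  have hcard := card_of_cycleType_mul_prod_of_nodup hnodup hsum (by rwa [Fintype.card_fin]) h2
  rw [Fintype.card_fin] at hcard
  obtain ⟨hc, -⟩ := mul_ne_zero_iff.mp (hcard ▸ n.factorial_ne_zero)
  rw [← hcard, Nat.cast_mul, Nat.cast_pow]
  field_simp [Nat.cast_ne_zero.mpr hc]

theorem sum_le_of_mem_oddDistinctCycleTypes {n : ℕ} {m : Multiset ℕ}
    (hm : m ∈ oddDistinctCycleTypes n) : m.sum ≤ n := by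
  simpa using (mem_image_cycleType_iff.mp (mem_filter.mp hm).1).1

theorem oddDistinctCycleTypes_of_le_one {n : ℕ} (hn : n ≤ 1) :
    oddDistinctCycleTypes n = {0} := by
  ext m
  simp only [oddDistinctCycleTypes, mem_filter, mem_image_cycleType_iff, Fintype.card_fin,
    mem_singleton]
  constructor
  · rintro ⟨⟨hsum, h2⟩, -⟩
    refine Multiset.eq_zero_of_forall_notMem fun a ha => ?_
    have := Multiset.le_sum_of_mem ha
    have := h2 a ha
    omega
  · rintro rfl
    simp [hn]

theorem Q_of_le_one {n : ℕ} (hn : n ≤ 1) : Q n = 1 := by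
  simp [Q_eq_sum_oddDistinctCycleTypes, oddDistinctCycleTypes_of_le_one hn]

theorem cons_mem_oddDistinctCycleTypes {n l : ℕ} {m : Multiset ℕ} (hl : Odd l) (h2 : 2 ≤ l)
    (hln : l ≤ n) (h2l : n < 2 * l) (hm : m ∈ oddDistinctCycleTypes (n - l)) :
    l ::ₘ m ∈ oddDistinctCycleTypes n := by
  obtain ⟨hct, hnodup, hodd, hfix⟩ := mem_filter.mp hm
  have hge := (mem_image_cycleType_iff.mp hct).2
  have hsum := sum_le_of_mem_oddDistinctCycleTypes hm
  have hlm : l ∉ m := fun h => by have := Multiset.le_sum_of_mem h; omega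
  refine mem_filter.mpr ⟨mem_image_cycleType_iff.mpr ⟨?_, ?_⟩, hnodup.cons hlm,
    Multiset.forall_mem_cons.mpr ⟨hl, hodd⟩, ?_⟩
  · rw [Multiset.sum_cons, Fintype.card_fin]; omega
  · exact Multiset.forall_mem_cons.mpr ⟨h2, hge⟩
  · rw [Multiset.sum_cons]; omega

theorem sum_Q_sub_div_sq_le_Q {n : ℕ} (L : Finset ℕ)
    (hL : ∀ l ∈ L, Odd l ∧ 2 ≤ l ∧ l ≤ n ∧ n < 2 * l) :
    ∑ l ∈ L, Q (n - l) / (l : ℝ) ^ 2 ≤ Q n := by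
  set f : Multiset ℕ → ℝ := fun m => ((m.prod : ℝ) ^ 2)⁻¹
  set S := L.sigma fun l => oddDistinctCycleTypes (n - l)
  have hinj : Set.InjOn (fun x : Σ _ : ℕ, Multiset ℕ => x.1 ::ₘ x.2) S := by
    rintro ⟨l, m⟩ hx ⟨l', m'⟩ hy (h : l ::ₘ m = l' ::ₘ m')
    simp only [S, coe_sigma, Set.mem_sigma_iff, mem_coe] at hx hy
    obtain rfl | hne := eq_or_ne l l'
    · rw [Multiset.cons_inj_right] at h
      rw [h]
    · have hlm' : l ∈ m' :=
        (Multiset.mem_cons.mp (h ▸ Multiset.mem_cons_self l m)).resolve_left hne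
      have := Multiset.le_sum_of_mem hlm'
      have := sum_le_of_mem_oddDistinctCycleTypes hy.2
      have := hL l hx.1
      have := hL l' hy.1
      omega
  have hsub : S.image (fun x => x.1 ::ₘ x.2) ⊆ oddDistinctCycleTypes n := by
    intro m hm
    obtain ⟨⟨l, m⟩, hx, rfl⟩ := mem_image.mp hm
    obtain ⟨hlL, hm⟩ := mem_sigma.mp hx
    obtain ⟨hl, h2, hln, h2l⟩ := hL l hlL
    exact cons_mem_oddDistinctCycleTypes hl h2 hln h2l hm
  calc ∑ l ∈ L, Q (n - l) / (l : ℝ) ^ 2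
      = ∑ x ∈ S, f (x.1 ::ₘ x.2) := by
        rw [sum_sigma]
        refine sum_congr rfl fun l _ => ?_
        rw [Q_eq_sum_oddDistinctCycleTypes, sum_div]
        refine sum_congr rfl fun m _ => ?_
        simp only [f, Multiset.prod_cons, Nat.cast_mul]
        ring
    _ = ∑ m ∈ S.image (fun x => x.1 ::ₘ x.2), f m := (sum_image hinj).symm
    _ ≤ ∑ m ∈ oddDistinctCycleTypes n, f m :=
        sum_le_sum_of_subset_of_nonneg hsub fun _ _ _ => by positivity
    _ = Q n := (Q_eq_sum_oddDistinctCycleTypes n).symm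

theorem Q_lower_bound_general (n k : ℕ) (hk : n < 2 * k) :
    ∑ l ∈ (Finset.Icc k n).filter (fun l => Odd l), Q (n - l) / (l : ℝ) ^ 2 ≤ Q n := by
  rcases le_or_gt 2 k with h2 | hk1
  · refine sum_Q_sub_div_sq_le_Q _ fun l hl => ?_
    simp only [mem_filter, mem_Icc] at hl
    exact ⟨hl.2, by omega, hl.1.2, by omega⟩
  · obtain rfl : k = 1 := by omega
    interval_cases n <;> simp [Q_of_le_one, filter_singleton]

/-- Lower bound for Q(Sₙ) when n/2 < k ≤ n: Proposition 2.3, second inequality. -/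
theorem Q_lower_bound (n k : ℕ) (hk : n < 2 * k) (hkn : k ≤ n) :
    ∑ l ∈ (Finset.Icc k n).filter (fun l => Odd l), Q (n - l) / (l : ℝ) ^ 2 ≤ Q n :=
  Q_lower_bound_general n k hk
end

section
/- For all n, k ∈ ℕ with 0 < k < n/2, Σ_{l=⌈n/2⌉}^{n-k-1} 1/(l^2 (n-l)^2) ≤ 1/(n^2 k) + 2·log(n/k)/n^3. -/
open Equiv

/-!
Writing `x = l` and `y = n - l`, the partial fraction identity
`1/(x²y²) = (1/x² + 1/y²)/n² + 2(1/x + 1/y)/n³` together with `1/x² ≤ 1/(x-1) - 1/x` and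
`1/x ≤ log x - log (x-1)` bounds each summand by an increment `G(l+1) - G(l)` of
`G(x) = (1/(n-x) - 1/(x-1))/n² + 2(log (x-1) - log (n-x))/n³`. The sum telescopes to
`G(n-k) - G(⌈n/2⌉)`. As `⌈n/2⌉ - 1` and `n - ⌈n/2⌉` differ by at most one, the lower end
contributes little, and this is absorbed by the terms `-1/(n-k-1)` and `log (n-k-1)` of the
upper end.
-/

open Finset Real

lemma one_div_sq_le_one_div_sub_one_sub_one_div {x : ℝ} (hx : 1 < x) :
    1 / x ^ 2 ≤ 1 / (x - 1) - 1 / x := by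
  rw [div_sub_div _ _ (by linarith) (by linarith), div_le_div_iff₀ (by positivity) (by nlinarith)]
  nlinarith

lemma one_div_le_log_sub_log_sub_one {x : ℝ} (hx : 1 < x) :
    1 / x ≤ log x - log (x - 1) := by
  have h := one_sub_inv_le_log_of_pos (show 0 < x / (x - 1) by apply div_pos <;> linarith)
  rw [log_div (by linarith) (by linarith), inv_div, one_sub_div (by linarith)] at h
  simpa using h

lemma one_div_sq_mul_sq_eq {x y : ℝ} (hx : x ≠ 0) (hy : y ≠ 0) (hxy : x + y ≠ 0) :
    1 / (x ^ 2 * y ^ 2) =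
      (1 / x ^ 2 + 1 / y ^ 2) / (x + y) ^ 2 + 2 * (1 / x + 1 / y) / (x + y) ^ 3 := by
  field_simp
  ring

noncomputable def inverseSquaresPrimitive (n x : ℝ) : ℝ :=
  (1 / (n - x) - 1 / (x - 1)) / n ^ 2 + 2 * (log (x - 1) - log (n - x)) / n ^ 3

lemma one_div_sq_mul_sq_le_inverseSquaresPrimitive_sub {n x : ℝ} (hx : 1 < x) (hnx : 1 < n - x) :
    1 / (x ^ 2 * (n - x) ^ 2) ≤
      inverseSquaresPrimitive n (x + 1) - inverseSquaresPrimitive n x := by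
  set y := n - x with hy
  have hn : n = x + y := by ring
  have hn0 : 0 < n := by linarith
  calc 1 / (x ^ 2 * y ^ 2)
      = (1 / x ^ 2 + 1 / y ^ 2) / n ^ 2 + 2 * (1 / x + 1 / y) / n ^ 3 := by
        rw [hn]; exact one_div_sq_mul_sq_eq (by positivity) (by positivity) (by positivity)
    _ ≤ ((1 / (x - 1) - 1 / x) + (1 / (y - 1) - 1 / y)) / n ^ 2 +
          2 * ((log x - log (x - 1)) + (log y - log (y - 1))) / n ^ 3 := by
        have hx₂ := one_div_sq_le_one_div_sub_one_sub_one_div hx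
        have hy₂ := one_div_sq_le_one_div_sub_one_sub_one_div hnx
        have hx₁ := one_div_le_log_sub_log_sub_one hx
        have hy₁ := one_div_le_log_sub_log_sub_one hnx
        gcongr ?_ / _ + 2 * ?_ / _ <;> linarith
    _ = inverseSquaresPrimitive n (x + 1) - inverseSquaresPrimitive n x := by
        simp only [inverseSquaresPrimitive, hy, add_sub_cancel_right,
          show n - (x + 1) = n - x - 1 by ring]
        ring

lemma sum_Icc_one_div_sq_mul_sq_le {n a b : ℕ} (ha : 2 ≤ a) (hb : b + 2 ≤ n) (hab : a ≤ b + 1) :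
    ∑ l ∈ Icc a b, 1 / ((l : ℝ) ^ 2 * ((n : ℝ) - l) ^ 2) ≤
      inverseSquaresPrimitive n ((b : ℝ) + 1) - inverseSquaresPrimitive n a := by
  rw [← Ico_add_one_right_eq_Icc]
  calc ∑ l ∈ Ico a (b + 1), 1 / ((l : ℝ) ^ 2 * ((n : ℝ) - l) ^ 2)
      ≤ ∑ l ∈ Ico a (b + 1),
          (inverseSquaresPrimitive n ((l + 1 : ℕ) : ℝ) - inverseSquaresPrimitive n (l : ℕ)) := by
        refine sum_le_sum fun l hl => ?_
        rw [mem_Ico] at hl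
        have hl2 : (2 : ℝ) ≤ l := by exact_mod_cast ha.trans hl.1
        have hln : (l : ℝ) + 2 ≤ n := by exact_mod_cast (by omega : l + 2 ≤ n)
        push_cast
        exact one_div_sq_mul_sq_le_inverseSquaresPrimitive_sub (by linarith) (by linarith)
    _ = inverseSquaresPrimitive n ((b : ℝ) + 1) - inverseSquaresPrimitive n a := by
        rw [sum_Ico_sub (fun m : ℕ => inverseSquaresPrimitive n m) hab]
        push_cast
        rfl

lemma inverseSquaresPrimitive_sub_le {n a k : ℝ} (hk : 1 ≤ k) (hkn : k + 1 < n) (ha : 2 ≤ a)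
    (hna : n ≤ 2 * a) (han : 2 * a ≤ n + 1) :
    inverseSquaresPrimitive n (n - k) - inverseSquaresPrimitive n a ≤
      1 / (n ^ 2 * k) + 2 * log (n / k) / n ^ 3 := by
  have hn : 0 < n := by linarith
  have hk0 : 0 < k := by linarith
  have hnk : 0 < n - k - 1 := by linarith
  have hna' : 0 < n - a := by linarith
  have ha1 : 0 < a - 1 := by linarith
  have hfrac : 1 / (a - 1) - 1 / (n - a) ≤ 1 / (n - k - 1) := by
    rw [div_sub_div _ _ ha1.ne' hna'.ne', div_le_div_iff₀ (by positivity) hnk]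
    nlinarith [mul_nonneg (sub_nonneg.2 hna) (sub_nonneg.2 ha)]
  have hlog : log (n - k - 1) + log (n - a) ≤ log n + log (a - 1) := by
    rw [← log_mul hnk.ne' hna'.ne', ← log_mul hn.ne' ha1.ne']
    exact log_le_log (by positivity) (by nlinarith)
  have hsplit : inverseSquaresPrimitive n (n - k) - inverseSquaresPrimitive n a =
      (1 / k - 1 / (n - k - 1) + (1 / (a - 1) - 1 / (n - a))) / n ^ 2 +
        2 * (log (n - k - 1) + log (n - a) - log k - log (a - 1)) / n ^ 3 := by
    simp only [inverseSquaresPrimitive, sub_sub_cancel]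
    ring
  have hfrac' : (1 / k - 1 / (n - k - 1) + (1 / (a - 1) - 1 / (n - a))) / n ^ 2 ≤
      1 / k / n ^ 2 := by
    gcongr ?_ / _; linarith
  have hlog' : 2 * (log (n - k - 1) + log (n - a) - log k - log (a - 1)) / n ^ 3 ≤
      2 * (log n - log k) / n ^ 3 := by
    gcongr 2 * ?_ / _; linarith
  rw [hsplit, log_div hn.ne' hk0.ne']
  calc _ ≤ 1 / k / n ^ 2 + 2 * (log n - log k) / n ^ 3 := add_le_add hfrac' hlog'
    _ = 1 / (n ^ 2 * k) + 2 * (log n - log k) / n ^ 3 := by ring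

/-- For 0 < k < n/2, the sum Σ_{l=⌈n/2⌉}^{n-k-1} 1/(l²(n-l)²) is at most
1/(n²k) + 2·log(n/k)/n³. -/
theorem sum_inverse_squares_bound (n k : ℕ) (hk : 0 < k) (hkn : 2 * k < n) :
    ∑ l ∈ Finset.Icc ((n + 1) / 2) (n - k - 1),
        1 / ((l : ℝ) ^ 2 * ((n : ℝ) - (l : ℝ)) ^ 2) ≤
      1 / ((n : ℝ) ^ 2 * (k : ℝ)) + 2 * Real.log ((n : ℝ) / (k : ℝ)) / (n : ℝ) ^ 3 := by
  have hupper : ((n - k - 1 : ℕ) : ℝ) + 1 = n - k := by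
    rw [eq_sub_iff_add_eq]
    exact_mod_cast (by omega : n - k - 1 + 1 + k = n)
  calc _ ≤ inverseSquaresPrimitive n ((n - k - 1 : ℕ) + 1) -
        inverseSquaresPrimitive n ((n + 1) / 2 : ℕ) :=
        sum_Icc_one_div_sq_mul_sq_le (by omega) (by omega) (by omega)
    _ ≤ _ := by
        rw [hupper]
        apply inverseSquaresPrimitive_sub_le <;> exact_mod_cast (by omega)
end

section
/- For all n, k ∈ ℕ with k ≥ 2, s_k(n) ≤ 1/t! < (e/t)^t, where t = ⌊n/(k-1)⌋. -/
open Equiv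

/-!
Let `a(N)` be the number of permutations of `N` points all of whose cycles are shorter than `k`.
Such a permutation is determined by the length `j < k` of the cycle through a chosen point, the
`j - 1` further points of that cycle in order, and a permutation of the remaining `N - j` points
with the same property. Hence `a(N) ≤ ∑_{j=1}^{k-1} (N-1)!/(N-j)! · a(N-j)`, that is
`s_k(N) ≤ (1/N) ∑_{j=1}^{k-1} s_k(N-j)`. As `⌊(N-j)/(k-1)⌋ ≥ t - 1` for these `j`,
induction on `N` gives `s_k(N) ≤ (k-1)/(N (t-1)!) ≤ 1/t!`, because `N ≥ t (k-1)`.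
The second inequality is `t^t/t! < 1 + t^t/t! ≤ e^t`.
-/

open Finset MulAction
open scoped Nat

namespace Equiv.Perm

variable {α β : Type*}

theorem pow_apply_eq_self_iff_period_dvd {σ : Perm α} {x : α} {n : ℕ} :
    (σ ^ n) x = x ↔ period σ x ∣ n :=
  pow_smul_eq_iff_period_dvd (m := σ) (a := x)

theorem pow_mod_period_apply (σ : Perm α) (x : α) (n : ℕ) :
    (σ ^ (n % period σ x)) x = (σ ^ n) x :=
  pow_mod_period_smul n (m := σ) (a := x)

theorem period_eq_of_pow_apply_eq_self_iff {σ : Perm α} {x : α} {m : ℕ}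
    (h : ∀ n : ℕ, (σ ^ n) x = x ↔ m ∣ n) : period σ x = m :=
  Nat.dvd_right_iff_eq.1 fun n => pow_apply_eq_self_iff_period_dvd.symm.trans (h n)

theorem period_subtypePerm {p : α → Prop} (σ : Perm α) (h : ∀ x, p (σ x) ↔ p x)
    (x : Subtype p) : period (σ.subtypePerm h) x = period σ x.1 :=
  period_eq_of_pow_apply_eq_self_iff fun n => by
    rw [subtypePerm_pow, Subtype.ext_iff, subtypePerm_apply]
    exact pow_apply_eq_self_iff_period_dvd

theorem period_permCongr (e : α ≃ β) (σ : Perm α) (x : α) :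
    period (e.permCongr σ) (e x) = period σ x :=
  period_eq_of_pow_apply_eq_self_iff fun n => by
    have hpow : e.permCongr σ ^ n = e.permCongr (σ ^ n) := (map_pow e.permCongrHom σ n).symm
    rw [hpow, permCongr_apply, symm_apply_apply, e.apply_eq_iff_eq]
    exact pow_apply_eq_self_iff_period_dvd

theorem period_eq_card_support_cycleOf [Fintype α] [DecidableEq α] {σ : Perm α} {x : α}
    (hx : σ x ≠ x) : period σ x = #(σ.cycleOf x).support :=
  period_eq_of_pow_apply_eq_self_iff fun _ => (isCycleOn_support_cycleOf σ x).pow_apply_eq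
    (mem_support_cycleOf_iff.2 ⟨SameCycle.refl _ _, mem_support.2 hx⟩)

/-- `period σ x` is the length of the cycle through `x`, fixed points counting as cycles of
length `1` (they are absent from `cycleType`). -/
def CycleLengthsLT (k : ℕ) (σ : Perm α) : Prop :=
  ∀ x : α, period σ x < k

theorem forall_mem_cycleType_lt_iff [Fintype α] [DecidableEq α] {k : ℕ} (hk : 2 ≤ k)
    (σ : Perm α) : (∀ i ∈ σ.cycleType, i < k) ↔ CycleLengthsLT k σ := by
  refine ⟨fun h x => ?_, fun h i hi => ?_⟩
  · by_cases hx : σ x = x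
    · rw [period_eq_one_iff.2 hx]
      omega
    · rw [period_eq_card_support_cycleOf hx]
      refine h _ (Multiset.mem_map.2 ⟨σ.cycleOf x, ?_, rfl⟩)
      exact cycleOf_mem_cycleFactorsFinset_iff.2 (mem_support.2 hx)
  · obtain ⟨c, hc, rfl⟩ := Multiset.mem_map.1 hi
    replace hc : c ∈ σ.cycleFactorsFinset := hc
    obtain ⟨x, hx⟩ := (mem_cycleFactorsFinset_iff.1 hc).1.nonempty_support
    obtain rfl := cycle_is_cycleOf hx hc
    rw [Function.comp_apply, ← period_eq_card_support_cycleOf]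
    · exact h x
    · exact mem_support.1 (support_cycleOf_le σ x hx)

theorem CycleLengthsLT.subtypePerm {k : ℕ} {p : α → Prop} {σ : Perm α}
    (hσ : CycleLengthsLT k σ) (h : ∀ x, p (σ x) ↔ p x) :
    CycleLengthsLT k (σ.subtypePerm h) :=
  fun x => (period_subtypePerm σ h x).trans_lt (hσ x)

theorem CycleLengthsLT.permCongr {k : ℕ} {σ : Perm α} (hσ : CycleLengthsLT k σ)
    (e : α ≃ β) : CycleLengthsLT k (e.permCongr σ) :=
  fun y => by simpa using (period_permCongr e σ (e.symm y)).trans_lt (hσ _)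

theorem period_pos [Finite α] (σ : Perm α) (x : α) : 0 < period σ x :=
  period_pos_of_orderOf_pos (orderOf_pos σ) x

theorem pow_apply_injOn_Iio_period (σ : Perm α) (x : α) :
    Set.InjOn (fun i : ℕ => (σ ^ i) x) (Set.Iio (period σ x)) := by
  have h := Function.iterate_injOn_Iio_minimalPeriod (f := (σ • ·)) (x := x)
  simp only [smul_iterate_apply, ← period_eq_minimalPeriod] at h
  exact h

theorem pow_apply_ne_self_of_lt_period {σ : Perm α} {x : α} {n : ℕ} (hn : 0 < n)
    (h : n < period σ x) : (σ ^ n) x ≠ x :=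
  pow_smul_ne_of_lt_period (m := σ) hn h

def cycleTail (σ : Perm α) (x : α) {j : ℕ} (hj : period σ x = j) :
    Fin (j - 1) ↪ {y // y ≠ x} where
  toFun i := ⟨(σ ^ (i + 1 : ℕ)) x, pow_apply_ne_self_of_lt_period (by omega) (by omega)⟩
  inj' i i' h := by
    have := pow_apply_injOn_Iio_period σ x (show (i : ℕ) + 1 < period σ x by omega)
      (show (i' : ℕ) + 1 < period σ x by omega) (congr_arg Subtype.val h)
    omega

noncomputable def orbitFinset [DecidableEq α] (σ : Perm α) (x : α) : Finset α :=
  (range (period σ x)).image fun i => (σ ^ i) x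

theorem card_orbitFinset [DecidableEq α] (σ : Perm α) (x : α) :
    #(orbitFinset σ x) = period σ x := by
  rw [orbitFinset, card_image_of_injOn (by simpa using pow_apply_injOn_Iio_period σ x),
    card_range]

theorem mem_orbitFinset [DecidableEq α] {σ : Perm α} {x y : α} :
    y ∈ orbitFinset σ x ↔ ∃ i < period σ x, (σ ^ i) x = y := by
  simp [orbitFinset]

theorem mem_orbitFinset_iff_sameCycle [Finite α] [DecidableEq α] {σ : Perm α} {x y : α} :
    y ∈ orbitFinset σ x ↔ σ.SameCycle x y := by
  rw [mem_orbitFinset]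
  constructor
  · rintro ⟨i, -, rfl⟩
    exact sameCycle_pow_right.2 (SameCycle.refl _ _)
  · intro h
    obtain ⟨i, rfl⟩ := h.exists_nat_pow_eq
    exact ⟨i % period σ x, Nat.mod_lt _ (period_pos σ x), pow_mod_period_apply σ x i⟩

section Fintype

variable [Fintype α] [DecidableEq α]

/-- Junk value `1` unless `S` is `σ`-invariant with `#S = m`. -/
noncomputable def restrictFin (S : Finset α) (m : ℕ) (σ : Perm α) : Perm (Fin m) :=
  if h : #S = m ∧ ∀ x, σ x ∈ S ↔ x ∈ S then
    (S.equivFinOfCardEq h.1).permCongr (σ.subtypePerm h.2)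
  else 1

theorem CycleLengthsLT.restrictFin {k : ℕ} {σ : Perm α} (hσ : CycleLengthsLT k σ) {S : Finset α}
    {m : ℕ} (hm : #S = m) (hS : ∀ x, σ x ∈ S ↔ x ∈ S) :
    CycleLengthsLT k (restrictFin S m σ) := by
  rw [Perm.restrictFin, dif_pos ⟨hm, hS⟩]
  exact (hσ.subtypePerm hS).permCongr _

theorem eqOn_of_restrictFin_eq {σ τ : Perm α} {S : Finset α} {m : ℕ} (hm : #S = m)
    (hσ : ∀ x, σ x ∈ S ↔ x ∈ S) (hτ : ∀ x, τ x ∈ S ↔ x ∈ S)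
    (h : restrictFin S m σ = restrictFin S m τ) : ∀ x ∈ S, σ x = τ x := by
  rw [restrictFin, dif_pos ⟨hm, hσ⟩, restrictFin, dif_pos ⟨hm, hτ⟩] at h
  intro x hx
  simpa using congr_arg Subtype.val (Equiv.ext_iff.1 ((permCongr _).injective h) ⟨x, hx⟩)

theorem card_compl_orbitFinset (σ : Perm α) (x : α) :
    #(orbitFinset σ x)ᶜ = Fintype.card α - period σ x := by
  rw [card_compl, card_orbitFinset]

theorem apply_mem_compl_orbitFinset_iff (σ : Perm α) (x y : α) :
    σ y ∈ (orbitFinset σ x)ᶜ ↔ y ∈ (orbitFinset σ x)ᶜ := by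
  simp only [mem_compl, mem_orbitFinset_iff_sameCycle, sameCycle_apply_right]

noncomputable def splitCycle (k : ℕ) (x : α) (j : ℕ)
    (σ : {σ : Perm α // CycleLengthsLT k σ ∧ period σ x = j}) :
    (Fin (j - 1) ↪ {y // y ≠ x}) ×
      {τ : Perm (Fin (Fintype.card α - j)) // CycleLengthsLT k τ} :=
  (cycleTail σ.1 x σ.2.2,
    ⟨restrictFin (orbitFinset σ.1 x)ᶜ _ σ.1, σ.2.1.restrictFin
      (by rw [card_compl_orbitFinset, σ.2.2]) (apply_mem_compl_orbitFinset_iff σ.1 x)⟩)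

theorem splitCycle_injective (k : ℕ) (x : α) (j : ℕ) :
    Function.Injective (splitCycle k x j) := by
  rintro ⟨σ, _, hσ⟩ ⟨τ, _, hτ⟩ heq
  simp only [splitCycle, Prod.mk.injEq, Subtype.mk.injEq] at heq
  obtain ⟨htail, hrest⟩ := heq
  have hpow_lt : ∀ i < j, (σ ^ i) x = (τ ^ i) x := by
    rintro (_ | i) hi
    · rfl
    · exact congr_arg Subtype.val (DFunLike.congr_fun htail ⟨i, by omega⟩)
  have hpow : ∀ i, (σ ^ i) x = (τ ^ i) x := fun i => by
    rw [← pow_mod_period_apply, hσ, hpow_lt _ (Nat.mod_lt _ (hσ ▸ period_pos σ x)), ← hτ,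
      pow_mod_period_apply]
  have horbit : orbitFinset σ x = orbitFinset τ x := by
    simp only [orbitFinset, hσ, hτ, hpow]
  refine Subtype.ext (Equiv.ext fun y => ?_)
  dsimp only
  by_cases hy : y ∈ orbitFinset σ x
  · obtain ⟨i, -, rfl⟩ := mem_orbitFinset.1 hy
    rw [← mul_apply, ← pow_succ', hpow, hpow i, ← mul_apply, ← pow_succ']
  · rw [← horbit] at hrest
    exact eqOn_of_restrictFin_eq (by rw [card_compl_orbitFinset, hσ])
      (apply_mem_compl_orbitFinset_iff σ x) (horbit ▸ apply_mem_compl_orbitFinset_iff τ x)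
      hrest y (mem_compl.2 hy)

theorem card_cycleLengthsLT_le_sum (k : ℕ) (x : α) :
    Nat.card {σ : Perm α // CycleLengthsLT k σ} ≤
      ∑ j ∈ Icc 1 (k - 1), (Fintype.card α - 1).descFactorial (j - 1) *
        Nat.card {τ : Perm (Fin (Fintype.card α - j)) // CycleLengthsLT k τ} := by
  classical
  rw [Nat.card_eq_fintype_card, Fintype.card_subtype,
    card_eq_sum_card_fiberwise (f := fun σ => period σ x) (t := Icc 1 (k - 1)) fun σ hσ => ?_]
  · refine sum_le_sum fun j _ => ?_
    rw [filter_filter, ← Fintype.card_subtype, ← Nat.card_eq_fintype_card]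
    refine (Nat.card_le_card_of_injective _ (splitCycle_injective k x j)).trans_eq ?_
    rw [Nat.card_prod, Nat.card_eq_fintype_card (α := Fin (j - 1) ↪ _),
      Fintype.card_embedding_eq, Fintype.card_fin, Fintype.card_subtype_compl,
      Fintype.card_subtype_eq]
  · rw [mem_coe, mem_filter] at hσ
    rw [mem_coe, mem_Icc]
    exact ⟨period_pos σ x, Nat.le_sub_one_of_lt (hσ.2 x)⟩

end Fintype

end Equiv.Perm

open Equiv.Perm

theorem s_eq_card_div_s10 {k : ℕ} (hk : 2 ≤ k) (n : ℕ) :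
    s k n = Nat.card {σ : Perm (Fin n) // CycleLengthsLT k σ} / (n ! : ℝ) := by
  rw [s, Nat.card_congr (Equiv.subtypeEquivRight fun σ => forall_mem_cycleType_lt_iff hk σ)]

theorem s_le_one (k n : ℕ) : s k n ≤ 1 := by
  refine div_le_one_of_le₀ ?_ (by positivity)
  exact_mod_cast (Finite.card_subtype_le _).trans_eq
    (by rw [Nat.card_perm, Nat.card_eq_fintype_card, Fintype.card_fin])

theorem s_le_sum_div {k N : ℕ} (hk : 2 ≤ k) (hN : k - 1 ≤ N) :
    s k N ≤ (∑ j ∈ Icc 1 (k - 1), s k (N - j)) / N := by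
  have hN0 : 0 < N := by omega
  have hcount := card_cycleLengthsLT_le_sum k (⟨0, hN0⟩ : Fin N)
  rw [Fintype.card_fin] at hcount
  have hterm : ∀ j ∈ Icc 1 (k - 1), ((N - 1).descFactorial (j - 1) : ℝ) *
      Nat.card {τ : Perm (Fin (N - j)) // CycleLengthsLT k τ} = (N - 1)! * s k (N - j) := by
    intro j hj
    have hj := mem_Icc.1 hj
    have hfac := Nat.factorial_mul_descFactorial (show j - 1 ≤ N - 1 by omega)
    rw [show N - 1 - (j - 1) = N - j by omega] at hfac
    rw [s_eq_card_div_s10 hk, ← hfac]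
    push_cast
    field_simp
  calc s k N ≤ (∑ j ∈ Icc 1 (k - 1), ((N - 1).descFactorial (j - 1) : ℝ) *
        Nat.card {τ : Perm (Fin (N - j)) // CycleLengthsLT k τ}) / N ! := by
        rw [s_eq_card_div_s10 hk]
        gcongr
        exact_mod_cast hcount
    _ = (∑ j ∈ Icc 1 (k - 1), s k (N - j)) / N := by
        rw [sum_congr rfl hterm, ← mul_sum, ← Nat.mul_factorial_pred hN0.ne']
        push_cast
        field_simp

theorem s_le_one_div_factorial (k N : ℕ) : s k N ≤ 1 / ((N / (k - 1))! : ℝ) := by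
  induction N using Nat.strong_induction_on with
  | _ N ih =>
  rcases Nat.eq_zero_or_pos (N / (k - 1)) with ht | ht
  · simpa [ht] using s_le_one k N
  obtain ⟨hk, hN⟩ := Nat.div_pos_iff.1 ht
  set t := N / (k - 1) with ht_def
  have hprev : ∀ j ∈ Icc 1 (k - 1), t - 1 ≤ (N - j) / (k - 1) := fun j hj => by
    rw [ht_def, Nat.div_eq_sub_div hk hN, Nat.add_sub_cancel]
    exact Nat.div_le_div_right (by have := (mem_Icc.1 hj).2; omega)
  have hN0 : (0 : ℝ) < N := by exact_mod_cast hk.trans_le hN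
  calc s k N ≤ (∑ j ∈ Icc 1 (k - 1), s k (N - j)) / N := s_le_sum_div (by omega) hN
    _ ≤ (∑ _j ∈ Icc 1 (k - 1), 1 / ((t - 1)! : ℝ)) / N := by
        gcongr with j hj
        refine (ih _ (by have := (mem_Icc.1 hj).1; omega)).trans
          (one_div_le_one_div_of_le (by positivity) ?_)
        exact_mod_cast Nat.factorial_le (hprev j hj)
    _ = (k - 1 : ℕ) / (N * (t - 1)! : ℝ) := by
        rw [sum_const, Nat.card_Icc, nsmul_eq_mul, Nat.add_sub_cancel]
        field_simp
    _ ≤ 1 / (t ! : ℝ) := by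
        rw [← Nat.mul_factorial_pred ht.ne', div_le_div_iff₀ (by positivity) (by positivity)]
        have hkt : ((k - 1 : ℕ) * t : ℝ) ≤ N := by
          exact_mod_cast (mul_comm _ _).trans_le (Nat.div_mul_le_self N (k - 1))
        push_cast
        calc 1 * (N * ((t - 1)! : ℝ)) = N * (t - 1)! := one_mul _
          _ ≥ ((k - 1 : ℕ) * t : ℝ) * (t - 1)! := by gcongr
          _ = _ := by ring

theorem one_div_factorial_lt_exp_one_div_pow {t : ℕ} (ht : 1 ≤ t) :
    1 / (t ! : ℝ) < (Real.exp 1 / t) ^ t := by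
  have hpos : (0 : ℝ) < t := by exact_mod_cast ht
  have hexp : 1 + (t : ℝ) ^ t / t ! ≤ Real.exp t := by
    refine le_trans ?_ (Real.sum_le_exp_of_nonneg hpos.le (t + 1))
    simpa using add_le_sum (f := fun i => (t : ℝ) ^ i / i !) (fun i _ => by positivity)
      (mem_range.2 (Nat.succ_pos t)) (self_mem_range_succ t) (by omega)
  rw [div_pow, Real.exp_one_pow, div_lt_div_iff₀ (by positivity) (by positivity), one_mul,
    ← div_lt_iff₀ (by positivity)]
  linarith

theorem s_k_bound_general (n k : ℕ) (ht : 1 ≤ n / (k - 1)) :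
    s k n ≤ 1 / (Nat.factorial (n / (k - 1)) : ℝ) ∧
    (1 : ℝ) / (Nat.factorial (n / (k - 1)) : ℝ) <
      (Real.exp 1 / ((n / (k - 1) : ℕ) : ℝ)) ^ (n / (k - 1)) :=
  ⟨s_le_one_div_factorial k n, one_div_factorial_lt_exp_one_div_pow ht⟩

/-- For k ≥ 2, s_k(n) ≤ 1/t! < (e/t)^t, where t = ⌊n/(k-1)⌋ (assumed ≥ 1). -/
theorem s_k_bound (n k : ℕ) (hk : 2 ≤ k) (ht : 1 ≤ n / (k - 1)) :
    s k n ≤ 1 / (Nat.factorial (n / (k - 1)) : ℝ) ∧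
    (1 : ℝ) / (Nat.factorial (n / (k - 1)) : ℝ) <
      (Real.exp 1 / ((n / (k - 1) : ℕ) : ℝ)) ^ (n / (k - 1)) :=
  s_k_bound_general n k ht
end

section
/- The generating function identity 1 + Σ_{n≥1} Q(S_n) x^n = Π_{d odd} (1 + x^d/d^2) holds as an identity of formal power series; equivalently, Q(S_n) = Σ_S Π_{s∈S} 1/s^2, where the sum is over all sets S of pairwise distinct odd positive integers with Σ_{s∈S} s = n. -/
/-! Two permutations have the same cycle type exactly when they have the same partition
(cycle lengths, fixed points counted as parts 1), and the condition defining Q(Sₙ) says that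
this partition has distinct odd parts. Hence n!² Q(Sₙ) = Σ_p c_p², summed over partitions p of n
into distinct odd parts, where c_p is the number of permutations with partition p. Distinct parts
(so at most one fixed point) leave no room for permuting cycles of equal length, so the
centraliser is the product of the cyclic groups generated by the cycles: c_p = n! / ∏ p. Finally, partitions into distinct parts
are the same thing as finite sets of positive integers. -/

open Equiv

open Finset Nat Nat.Partition

namespace Multiset

theorem nodup_replicate {α : Type*} {n : ℕ} {a : α} : (replicate n a).Nodup ↔ n ≤ 1 := by
  rw [← coe_replicate, coe_nodup, List.nodup_replicate]

theorem filter_two_le_add_replicate_count_one {s : Multiset ℕ} (hs : ∀ a ∈ s, 0 < a) :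
    s.filter (2 ≤ ·) + replicate (s.count 1) 1 = s := by
  conv_rhs => rw [← filter_add_not (2 ≤ ·) s]
  rw [← filter_eq']
  congr 1
  exact filter_congr fun a ha => by have := hs a ha; omega

end Multiset

theorem card_filter_pairs_eq_sum_sq_card_fiber {β γ : Type*} [Fintype β] [DecidableEq γ]
    (f : β → γ) (t : Finset γ) :
    #{q : β × β | f q.1 = f q.2 ∧ f q.1 ∈ t} = ∑ c ∈ t, #{b | f b = c} ^ 2 := by
  rw [card_eq_sum_card_fiberwise (f := fun q => f q.1) fun q hq => (mem_filter.mp hq).2.2]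
  refine sum_congr rfl fun c hc => ?_
  rw [sq, ← card_product]
  congr 1
  ext q
  simp only [mem_filter, mem_univ, true_and, mem_product]
  constructor
  · rintro ⟨⟨hq, -⟩, rfl⟩
    exact ⟨rfl, hq.symm⟩
  · rintro ⟨rfl, hq⟩
    exact ⟨⟨hq.symm, hc⟩, rfl⟩

theorem Nat.Partition.mem_oddDistincts_iff {n : ℕ} {p : n.Partition} :
    p ∈ oddDistincts n ↔ p.parts.Nodup ∧ ∀ i ∈ p.parts, Odd i := by
  simp only [oddDistincts, odds, distincts, restricted, mem_inter, mem_filter, mem_univ,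
    true_and, not_even_iff_odd, and_comm]

namespace Equiv.Perm

variable {α : Type*} [Fintype α] [DecidableEq α]

theorem partition_eq_iff_cycleType_eq {σ : Perm α} {p : (Fintype.card α).Partition} :
    σ.partition = p ↔ σ.cycleType = p.parts.filter (2 ≤ ·) := by
  refine ⟨fun h => h ▸ filter_parts_partition_eq_cycleType.symm, fun h => ?_⟩
  have hp := Multiset.filter_two_le_add_replicate_count_one fun a ha => p.parts_pos ha
  have hsum := congrArg Multiset.sum hp
  rw [Multiset.sum_add, Multiset.sum_replicate, smul_eq_mul, mul_one, p.parts_sum] at hsum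
  ext1
  rw [parts_partition, ← sum_cycleType, h]
  conv_rhs => rw [← hp]
  congr 2
  omega

theorem card_partition_eq_mul_prod {p : (Fintype.card α).Partition} (hp : p.parts.Nodup) :
    #{σ : Perm α | σ.partition = p} * p.parts.prod = (Fintype.card α)! := by
  set m := p.parts.filter (2 ≤ ·)
  have hdecomp : m + Multiset.replicate (p.parts.count 1) 1 = p.parts :=
    Multiset.filter_two_le_add_replicate_count_one fun a ha => p.parts_pos ha
  have hsum : m.sum + p.parts.count 1 = Fintype.card α := by
    have := congrArg Multiset.sum hdecomp
    rwa [Multiset.sum_add, Multiset.sum_replicate, smul_eq_mul, mul_one, p.parts_sum] at this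
  have hprod : m.prod = p.parts.prod := by
    conv_rhs => rw [← hdecomp]
    rw [Multiset.prod_add, Multiset.prod_replicate, one_pow, mul_one]
  have hcount : p.parts.count 1 ≤ 1 := Multiset.nodup_iff_count_le_one.mp hp 1
  have hmults : ∏ k ∈ m.toFinset, (m.count k)! = 1 := prod_eq_one fun k hk => by
    rw [Multiset.count_eq_one_of_mem (hp.filter _) (Multiset.mem_toFinset.mp hk), factorial_one]
  have := card_of_cycleType_mul_eq α m
  rw [if_pos ⟨by omega, fun a ha => (Multiset.mem_filter.mp ha).2⟩,
    show Fintype.card α - m.sum = p.parts.count 1 by omega, factorial_eq_one.mpr hcount,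
    hmults, one_mul, mul_one, hprod] at this
  simpa only [partition_eq_iff_cycleType_eq] using this

theorem partition_mem_oddDistincts_iff {σ : Perm α} :
    σ.partition ∈ oddDistincts (Fintype.card α) ↔
      σ.cycleType.Nodup ∧ (∀ i ∈ σ.cycleType, Odd i) ∧
        Fintype.card α - σ.cycleType.sum ≤ 1 := by
  have hdisj : _root_.Disjoint σ.cycleType (Multiset.replicate (Fintype.card α - #σ.support) 1) :=
    Multiset.disjoint_left.mpr fun h h' =>
      (one_lt_of_mem_cycleType h).ne' (Multiset.eq_of_mem_replicate h')
  simp only [mem_oddDistincts_iff, parts_partition, Multiset.nodup_add, Multiset.nodup_replicate,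
    sum_cycleType, Multiset.mem_add, or_imp, forall_and]
  have : ∀ i ∈ Multiset.replicate (Fintype.card α - #σ.support) 1, Odd i :=
    fun i hi => Multiset.eq_of_mem_replicate hi ▸ odd_one
  tauto

end Equiv.Perm

def oddDistinctSets (n : ℕ) : Finset (Finset ℕ) :=
  (Icc 1 n).powerset.filter fun S => (∀ s ∈ S, Odd s) ∧ S.sum id = n

theorem mem_oddDistinctSets {n : ℕ} {S : Finset ℕ} :
    S ∈ oddDistinctSets n ↔ S ⊆ Icc 1 n ∧ (∀ s ∈ S, Odd s) ∧ S.sum id = n := by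
  rw [oddDistinctSets, mem_filter, mem_powerset]

theorem sum_oddDistinctSets_eq_sum_oddDistincts {M : Type*} [AddCommMonoid M] (n : ℕ)
    (g : Multiset ℕ → M) :
    ∑ S ∈ oddDistinctSets n, g S.val = ∑ p ∈ oddDistincts n, g p.parts := by
  refine sum_bij
    (fun S hS => ⟨S.val, fun hi => (mem_Icc.mp ((mem_oddDistinctSets.mp hS).1 hi)).1,
      (sum_val S).trans (mem_oddDistinctSets.mp hS).2.2⟩)
    (fun S hS => mem_oddDistincts_iff.mpr ⟨S.nodup, (mem_oddDistinctSets.mp hS).2.1⟩)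
    (fun S _ T _ h => val_injective (congrArg Nat.Partition.parts h)) (fun p hp => ?_)
    (fun _ _ => rfl)
  obtain ⟨hnodup, hodd⟩ := mem_oddDistincts_iff.mp hp
  have hval : p.parts.toFinset.val = p.parts := by rw [Multiset.toFinset_val, hnodup.dedup]
  refine ⟨p.parts.toFinset, mem_oddDistinctSets.mpr ⟨fun i hi => ?_, fun i hi => ?_, ?_⟩,
    Nat.Partition.ext hval⟩
  · rw [Multiset.mem_toFinset] at hi
    exact mem_Icc.mpr ⟨p.parts_pos hi, le_of_mem_parts hi⟩
  · exact hodd i (Multiset.mem_toFinset.mp hi)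
  · rw [← sum_val, hval, p.parts_sum]

theorem Q_eq_sum_oddDistincts (n : ℕ) :
    Q n = ∑ p ∈ oddDistincts (Fintype.card (Fin n)), 1 / (p.parts.prod : ℝ) ^ 2 := by
  have hpred (q : Perm (Fin n) × Perm (Fin n)) :
      (q.1.cycleType = q.2.cycleType ∧ q.1.cycleType.Nodup ∧ (∀ i ∈ q.1.cycleType, Odd i) ∧
        n - q.1.cycleType.sum ≤ 1) ↔
      q.1.partition = q.2.partition ∧ q.1.partition ∈ oddDistincts (Fintype.card (Fin n)) := by
    rw [Perm.partition_mem_oddDistincts_iff, ← Perm.partition_eq_of_isConj,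
      Perm.isConj_iff_cycleType_eq, Fintype.card_fin]
  rw [Q, Nat.card_congr (Equiv.subtypeEquivRight hpred), Nat.card_eq_fintype_card,
    Fintype.card_subtype, card_filter_pairs_eq_sum_sq_card_fiber, Nat.cast_sum, sum_div]
  refine sum_congr rfl fun p hp => ?_
  have hcard : #{σ : Perm (Fin n) | σ.partition = p} * p.parts.prod = n ! :=
    (Perm.card_partition_eq_mul_prod (mem_oddDistincts_iff.mp hp).1).trans
      (by rw [Fintype.card_fin])
  have hne : #{σ : Perm (Fin n) | σ.partition = p} * p.parts.prod ≠ 0 :=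
    hcard ▸ factorial_ne_zero n
  have hfib : (#{σ : Perm (Fin n) | σ.partition = p} : ℝ) ≠ 0 := by
    exact_mod_cast left_ne_zero_of_mul hne
  have hprod : (p.parts.prod : ℝ) ≠ 0 := by exact_mod_cast right_ne_zero_of_mul hne
  rw [← hcard]
  push_cast
  field_simp

/-- Q(Sₙ) = Σ_S Π_{s∈S} 1/s², summing over all finite sets S of pairwise distinct odd
positive integers with Σ_{s∈S} s = n (the coefficient identity for the generating
function Π_{d odd} (1 + x^d/d²)). -/
theorem Q_eq_sum_over_distinct_odd_sets (n : ℕ) :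
    Q n = ∑ S ∈ (Finset.Icc 1 n).powerset.filter
        (fun S => (∀ s ∈ S, Odd s) ∧ S.sum id = n),
      ∏ s ∈ S, 1 / (s : ℝ) ^ 2 := by
  rw [Q_eq_sum_oddDistincts,
    ← sum_oddDistinctSets_eq_sum_oddDistincts (g := fun μ => 1 / (μ.prod : ℝ) ^ 2),
    Fintype.card_fin]
  refine sum_congr rfl fun S _ => ?_
  simp only [prod_val, Nat.cast_prod, id, ← prod_pow, one_div, prod_inv_distrib]
end
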